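/- Let d ≥ 1, λ ≥ 0, K ≥ 0, and let φ : ℝ^d → ℝ be K-Lipschitz and λ-concave. For t > 0 let u_t be the Hopf–Lax function and set λ_t = λ/(1+λt), and define D u_t(x) = {q ∈ ℝ^d : u_t(z) ≤ u_t(x) + ⟨q, z − x⟩ + (λ_t/2)‖z − x‖² for all z}. Suppose x, x̂ : [0,∞) → ℝ^d are locally Lipschitz curves with x(0) = x̂(0), such that for almost every t > 0 both derivatives exist and satisfy x'(t) ∈ D u_t(x(t)) and x̂'(t) ∈ D u_t(x̂(t)). Then x(t) = x̂(t) for all t ≥ 0. -/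

import Mathlib

open scoped RealInnerProductSpace
open MeasureTheory
noncomputable section

/-- The Hopf–Lax function. -/
def hopfLax {d : ℕ} (φ : EuclideanSpace ℝ (Fin d) → ℝ) (t : ℝ)
    (x : EuclideanSpace ℝ (Fin d)) : ℝ :=
  ⨅ y : EuclideanSpace ℝ (Fin d), (‖x - y‖ ^ 2 / (2 * t) + φ y)

/-- The differential `D u_t(x)` of the Hopf–Lax function, with `λ_t = λ/(1+λt)`. -/
def DHopfLax {d : ℕ} (φ : EuclideanSpace ℝ (Fin d) → ℝ) (lam t : ℝ)
    (x : EuclideanSpace ℝ (Fin d)) : Set (EuclideanSpace ℝ (Fin d)) :=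
  {q | ∀ z, hopfLax φ t z ≤ hopfLax φ t x + ⟪q, z - x⟫ +
      (lam / (1 + lam * t)) / 2 * ‖z - x‖ ^ 2}

/-!
Subtracting the two defining inequalities of `D u_t`, at `x(t)` tested against `x̂(t)` and vice
versa, shows that `D u_t` is monotone up to `λ_t ≤ λ`: `⟪v - w, x(t) - x̂(t)⟫ ≤ λ ‖x(t) - x̂(t)‖²`.
Hence `e^{-2λt} ‖x(t) - x̂(t)‖²` is absolutely continuous with a.e. nonpositive derivative; it
vanishes at `0`, so it vanishes everywhere.
-/

open Set Filter

namespace AbsolutelyContinuousOnInterval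

variable {F : Type*} [SeminormedAddCommGroup F] {a b : ℝ}

theorem norm {f : ℝ → F} (hf : AbsolutelyContinuousOnInterval f a b) :
    AbsolutelyContinuousOnInterval (fun t => ‖f t‖) a b :=
  squeeze_zero (fun _ => Finset.sum_nonneg fun _ _ => dist_nonneg)
    (fun _ => Finset.sum_le_sum fun _ _ =>
      (dist_norm_norm_le _ _).trans_eq (dist_eq_norm _ _).symm) hf

theorem le_of_ae_hasDerivAt_nonpos {g : ℝ → ℝ} (hab : a ≤ b)
    (hg : AbsolutelyContinuousOnInterval g a b)
    (hg' : ∀ᵐ t, t ∈ Ioc a b → ∃ g', HasDerivAt g g' t ∧ g' ≤ 0) :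
    g b ≤ g a := by
  rw [← sub_nonpos, ← hg.integral_deriv_eq_sub, intervalIntegral.integral_of_le hab]
  refine integral_nonpos_of_ae ?_
  rw [EventuallyLE, ae_restrict_iff' measurableSet_Ioc]
  filter_upwards [hg'] with t ht hmem
  obtain ⟨g', hderiv, hneg⟩ := ht hmem
  rw [hderiv.deriv]
  exact hneg

end AbsolutelyContinuousOnInterval

section OneSidedLipschitz

variable {E : Type*} [NormedAddCommGroup E] [InnerProductSpace ℝ E]

theorem eq_of_ae_inner_deriv_sub_le {x y : ℝ → E} {lam a b : ℝ} (hab : a ≤ b)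
    (hx : AbsolutelyContinuousOnInterval x a b) (hy : AbsolutelyContinuousOnInterval y a b)
    (ha : x a = y a)
    (hderiv : ∀ᵐ t, t ∈ Ioc a b → ∃ v w, HasDerivAt x v t ∧ HasDerivAt y w t ∧
      ⟪v - w, x t - y t⟫ ≤ lam * ‖x t - y t‖ ^ 2) :
    x b = y b := by
  set g : ℝ → ℝ := fun t => Real.exp (-(2 * lam * t)) * ‖x t - y t‖ ^ 2 with hg
  have hexp : AbsolutelyContinuousOnInterval (fun t => Real.exp (-(2 * lam * t))) a b :=
    ContDiffOn.absolutelyContinuousOnInterval (by fun_prop)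
  have hnorm := (hx.fun_sub hy).norm
  have hg_ac : AbsolutelyContinuousOnInterval g a b := by
    simpa only [hg, pow_two] using hexp.fun_mul (hnorm.fun_mul hnorm)
  have hg' : ∀ᵐ t, t ∈ Ioc a b → ∃ g', HasDerivAt g g' t ∧ g' ≤ 0 := by
    filter_upwards [hderiv] with t ht hmem
    obtain ⟨v, w, hv, hw, hmono⟩ := ht hmem
    have hlin : HasDerivAt (fun t : ℝ => -(2 * lam * t)) (-(2 * lam)) t := by
      simpa using ((hasDerivAt_id t).const_mul (2 * lam)).fun_neg
    refine ⟨_, hlin.exp.mul (hv.fun_sub hw).norm_sq, ?_⟩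
    rw [real_inner_comm] at hmono
    nlinarith [mul_le_mul_of_nonneg_left hmono (Real.exp_pos (-(2 * lam * t))).le]
  have hgb : g b ≤ 0 := by
    simpa [hg, ha] using hg_ac.le_of_ae_hasDerivAt_nonpos hab hg'
  have hnorm_sq : ‖x b - y b‖ ^ 2 ≤ 0 :=
    nonpos_of_mul_nonpos_right (by simpa [hg] using hgb) (Real.exp_pos _)
  exact sub_eq_zero.mp (norm_eq_zero.mp (pow_eq_zero_iff two_ne_zero |>.mp
    (le_antisymm hnorm_sq (by positivity))))

end OneSidedLipschitz

theorem inner_sub_le_of_mem_DHopfLax {d : ℕ} {φ : EuclideanSpace ℝ (Fin d) → ℝ} {lam t : ℝ}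
    (hlam : 0 ≤ lam) (ht : 0 ≤ t) {p q v w : EuclideanSpace ℝ (Fin d)}
    (hv : v ∈ DHopfLax φ lam t p) (hw : w ∈ DHopfLax φ lam t q) :
    ⟪v - w, p - q⟫ ≤ lam * ‖p - q‖ ^ 2 := by
  have hlam_t : lam / (1 + lam * t) ≤ lam := div_le_self hlam (by nlinarith)
  have hvq := hv q
  have hwp := hw p
  rw [← neg_sub p q, inner_neg_right, norm_neg] at hvq
  rw [inner_sub_left]
  nlinarith [mul_le_mul_of_nonneg_right hlam_t (sq_nonneg ‖p - q‖)]

theorem stmt6 (d : ℕ) (lam : ℝ) (hlam : 0 ≤ lam)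
    (φ : EuclideanSpace ℝ (Fin d) → ℝ)
    (x xh : ℝ → EuclideanSpace ℝ (Fin d))
    (hxLip : ∀ T : ℝ, 0 < T → ∃ C : NNReal, LipschitzOnWith C x (Set.Icc 0 T))
    (hxhLip : ∀ T : ℝ, 0 < T → ∃ C : NNReal, LipschitzOnWith C xh (Set.Icc 0 T))
    (h0 : x 0 = xh 0)
    (hx : ∀ᵐ t ∂(volume : Measure ℝ), 0 < t →
      ∃ v, HasDerivAt x v t ∧ v ∈ DHopfLax φ lam t (x t))
    (hxh : ∀ᵐ t ∂(volume : Measure ℝ), 0 < t →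
      ∃ v, HasDerivAt xh v t ∧ v ∈ DHopfLax φ lam t (xh t)) :
    ∀ t : ℝ, 0 ≤ t → x t = xh t := by
  intro T hT
  rcases hT.eq_or_lt with rfl | hT
  · exact h0
  obtain ⟨Cx, hCx⟩ := hxLip T hT
  obtain ⟨Ch, hCh⟩ := hxhLip T hT
  rw [← uIcc_of_le hT.le] at hCx hCh
  refine eq_of_ae_inner_deriv_sub_le (lam := lam) hT.le hCx.absolutelyContinuousOnInterval
    hCh.absolutelyContinuousOnInterval h0 ?_
  filter_upwards [hx, hxh] with t hxt hxht hmem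
  obtain ⟨v, hv, hvD⟩ := hxt hmem.1
  obtain ⟨w, hw, hwD⟩ := hxht hmem.1
  exact ⟨v, w, hv, hw, inner_sub_le_of_mem_DHopfLax hlam hmem.1.le hvD hwD⟩
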